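/- arXiv:2404.10444 — 2 statements merged into one kernel-verified Lean document; each statement's English description precedes it below -/
import Mathlib

section
/- Let (Ω, d_Ω) be a metric space, μ a probability measure on Ω, (X, d_X) a metric space, β ∈ (0, 1], and ρ : X × Ω → [0, ∞) a jointly measurable family of μ-densities. Assume there are a measurable L : Ω → [0, ∞) and a constant C > 0 with |ρ(x₁, y) − ρ(x₂, y)| ≤ L(y) d_X(x₁, x₂)^β for μ-almost all y and all x₁, x₂ ∈ X, and ∫ L(y)² μ(dy) ≤ C². Define M(x, ω) = ∫ d_Ω(y, ω)² ρ(x, y) μ(dy) and H(ω₁, ω₂) = (∫ (d_Ω(y, ω₁) + d_Ω(y, ω₂))² μ(dy))^{1/2}. Then for all x₁, x₂ ∈ X and all ω₁, ω₂ ∈ Ω with H(ω₁, ω₂) < ∞ and all four values M(xⱼ, ωᵢ) finite, |(M(x₁, ω₁) − M(x₁, ω₂)) − (M(x₂, ω₁) − M(x₂, ω₂))| ≤ C · d_Ω(ω₁, ω₂) · H(ω₁, ω₂) · d_X(x₁, x₂)^β. -/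
open MeasureTheory

/-!
The second difference is a single integral, `∫ (d(y,ω₁)² - d(y,ω₂)²) (ρ(x₁,y) - ρ(x₂,y)) dμ`.
Factoring `d(y,ω₁)² - d(y,ω₂)²` and using the triangle inequality bounds the first factor by
`d(ω₁,ω₂) (d(y,ω₁) + d(y,ω₂))`, the Hölder condition bounds the second by `L(y) d(x₁,x₂)^β`,
and Cauchy–Schwarz in `L²(μ)` turns the integral of `(d(y,ω₁) + d(y,ω₂)) L(y)` into `H(ω₁,ω₂) · C`.
-/

theorem abs_dist_sq_sub_dist_sq_le {α : Type*} [PseudoMetricSpace α] (x y z : α) :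
    |dist z x ^ 2 - dist z y ^ 2| ≤ dist x y * (dist z x + dist z y) := by
  have hsum : 0 ≤ dist z x + dist z y := add_nonneg dist_nonneg dist_nonneg
  rw [sq_sub_sq, abs_mul, abs_of_nonneg hsum, mul_comm]
  gcongr
  simpa only [dist_comm z] using abs_dist_sub_le x y z

section Integral

variable {α : Type*} [MeasurableSpace α] {μ : Measure α}

theorem memLp_two_of_integrable_sq_of_nonneg {f : α → ℝ} (hf₀ : ∀ y, 0 ≤ f y)
    (hf : Integrable (fun y => f y ^ 2) μ) : MemLp f 2 μ := by
  refine (memLp_two_iff_integrable_sq ?_).2 hf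
  exact (Real.continuous_sqrt.comp_aestronglyMeasurable hf.1).congr
    (.of_forall fun y => Real.sqrt_sq (hf₀ y))

theorem integral_norm_mul_norm_le_sqrt_mul_sqrt {f g : α → ℝ} (hf : MemLp f 2 μ)
    (hg : MemLp g 2 μ) :
    ∫ y, ‖f y‖ * ‖g y‖ ∂μ ≤ √(∫ y, f y ^ 2 ∂μ) * √(∫ y, g y ^ 2 ∂μ) := by
  have h := integral_mul_norm_le_Lp_mul_Lq Real.HolderConjugate.two_two
    (by simpa using hf) (by simpa using hg)
  simpa only [Real.norm_eq_abs, Real.rpow_two, sq_abs, Real.sqrt_eq_rpow, one_div] using h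

theorem integral_sub_mul_sub {a b u v : α → ℝ} (hau : Integrable (fun y => a y * u y) μ)
    (hbu : Integrable (fun y => b y * u y) μ) (hav : Integrable (fun y => a y * v y) μ)
    (hbv : Integrable (fun y => b y * v y) μ) :
    ∫ y, (a y - b y) * (u y - v y) ∂μ =
      (∫ y, a y * u y ∂μ - ∫ y, b y * u y ∂μ) - (∫ y, a y * v y ∂μ - ∫ y, b y * v y ∂μ) := by
  have hu : Integrable (fun y => a y * u y - b y * u y) μ := hau.sub hbu
  have hv : Integrable (fun y => a y * v y - b y * v y) μ := hav.sub hbv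
  rw [← integral_sub hau hbu, ← integral_sub hav hbv, ← integral_sub hu hv]
  congr 1 with y
  ring

end Integral

theorem stmt_5_general {Ω X : Type*} [MetricSpace Ω] [MeasurableSpace Ω] [MetricSpace X]
    (μ : Measure Ω)
    (β : ℝ)
    (ρ : X → Ω → ℝ)
    (L : Ω → ℝ) (hLmeas : Measurable L)
    (C : ℝ) (hC : 0 < C)
    (hHolder : ∀ᵐ y ∂μ, ∀ x₁ x₂ : X, |ρ x₁ y - ρ x₂ y| ≤ L y * dist x₁ x₂ ^ β)
    (hL2int : Integrable (fun y => L y ^ 2) μ)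
    (hL2 : ∫ y, L y ^ 2 ∂μ ≤ C ^ 2)
    (M : X → Ω → ℝ) (hM : ∀ x ω, M x ω = ∫ y, dist y ω ^ 2 * ρ x y ∂μ)
    (Hf : Ω → Ω → ℝ)
    (hHf : ∀ ω₁ ω₂, Hf ω₁ ω₂ = Real.sqrt (∫ y, (dist y ω₁ + dist y ω₂) ^ 2 ∂μ))
    (x₁ x₂ : X) (ω₁ ω₂ : Ω)
    (hHfin : Integrable (fun y => (dist y ω₁ + dist y ω₂) ^ 2) μ)
    (hMfin : ∀ x ∈ ({x₁, x₂} : Set X), ∀ ω ∈ ({ω₁, ω₂} : Set Ω),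
      Integrable (fun y => dist y ω ^ 2 * ρ x y) μ) :
    |(M x₁ ω₁ - M x₁ ω₂) - (M x₂ ω₁ - M x₂ ω₂)| ≤
      C * dist ω₁ ω₂ * Hf ω₁ ω₂ * dist x₁ x₂ ^ β := by
  set f : Ω → ℝ := fun y => dist y ω₁ + dist y ω₂
  have hf : MemLp f 2 μ :=
    memLp_two_of_integrable_sq_of_nonneg (fun y => add_nonneg dist_nonneg dist_nonneg) hHfin
  have hL : MemLp L 2 μ := (memLp_two_iff_integrable_sq hLmeas.aestronglyMeasurable).2 hL2int
  have hLC : √(∫ y, L y ^ 2 ∂μ) ≤ C := Real.sqrt_le_iff.2 ⟨hC.le, hL2⟩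
  have hbound : ∀ᵐ y ∂μ, ‖(dist y ω₁ ^ 2 - dist y ω₂ ^ 2) * (ρ x₁ y - ρ x₂ y)‖ ≤
      dist ω₁ ω₂ * dist x₁ x₂ ^ β * (‖f y‖ * ‖L y‖) := by
    filter_upwards [hHolder] with y hy
    rw [Real.norm_eq_abs, abs_mul, Real.norm_of_nonneg (add_nonneg dist_nonneg dist_nonneg)]
    calc |dist y ω₁ ^ 2 - dist y ω₂ ^ 2| * |ρ x₁ y - ρ x₂ y|
        ≤ (dist ω₁ ω₂ * f y) * (‖L y‖ * dist x₁ x₂ ^ β) := by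
          gcongr
          · exact abs_dist_sq_sub_dist_sq_le ω₁ ω₂ y
          · exact (hy x₁ x₂).trans (by gcongr; exact Real.le_norm_self _)
      _ = dist ω₁ ω₂ * dist x₁ x₂ ^ β * (f y * ‖L y‖) := by ring
  rw [hM, hM, hM, hM, ← integral_sub_mul_sub (hMfin x₁ (by simp) ω₁ (by simp))
    (hMfin x₁ (by simp) ω₂ (by simp)) (hMfin x₂ (by simp) ω₁ (by simp))
    (hMfin x₂ (by simp) ω₂ (by simp))]
  calc |∫ y, (dist y ω₁ ^ 2 - dist y ω₂ ^ 2) * (ρ x₁ y - ρ x₂ y) ∂μ|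
      ≤ ∫ y, dist ω₁ ω₂ * dist x₁ x₂ ^ β * (‖f y‖ * ‖L y‖) ∂μ :=
        norm_integral_le_of_norm_le ((hf.norm.integrable_mul hL.norm).const_mul _) hbound
    _ = dist ω₁ ω₂ * dist x₁ x₂ ^ β * ∫ y, ‖f y‖ * ‖L y‖ ∂μ := integral_const_mul _ _
    _ ≤ dist ω₁ ω₂ * dist x₁ x₂ ^ β * (Hf ω₁ ω₂ * C) := by
        rw [hHf]
        gcongr
        exact (integral_norm_mul_norm_le_sqrt_mul_sqrt hf hL).trans (by gcongr)
    _ = C * dist ω₁ ω₂ * Hf ω₁ ω₂ * dist x₁ x₂ ^ β := by ring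

/-- Bias-control lemma: Hölder continuity (with square-integrable Hölder constant) of the
conditional densities `ρ(x, ·)` implies Hölder continuity in `x` of differences of the
Fréchet objective `M(x, ω) = ∫ d(y, ω)² ρ(x, y) μ(dy)`, with factor
`C · d(ω₁, ω₂) · H(ω₁, ω₂)` where `H(ω₁, ω₂) = (∫ (d(y,ω₁)+d(y,ω₂))² μ(dy))^{1/2}`. -/
theorem stmt_5 {Ω X : Type*} [MetricSpace Ω] [MeasurableSpace Ω] [MetricSpace X]
    [MeasurableSpace X]
    (μ : Measure Ω) [IsProbabilityMeasure μ]
    (β : ℝ) (hβ0 : 0 < β) (hβ1 : β ≤ 1)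
    (ρ : X → Ω → ℝ) (hρmeas : Measurable fun p : X × Ω => ρ p.1 p.2)
    (hρnonneg : ∀ x y, 0 ≤ ρ x y)
    (L : Ω → ℝ) (hLmeas : Measurable L) (hLnonneg : ∀ y, 0 ≤ L y)
    (C : ℝ) (hC : 0 < C)
    (hHolder : ∀ᵐ y ∂μ, ∀ x₁ x₂ : X, |ρ x₁ y - ρ x₂ y| ≤ L y * dist x₁ x₂ ^ β)
    (hL2int : Integrable (fun y => L y ^ 2) μ)
    (hL2 : ∫ y, L y ^ 2 ∂μ ≤ C ^ 2)
    (M : X → Ω → ℝ) (hM : ∀ x ω, M x ω = ∫ y, dist y ω ^ 2 * ρ x y ∂μ)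
    (Hf : Ω → Ω → ℝ)
    (hHf : ∀ ω₁ ω₂, Hf ω₁ ω₂ = Real.sqrt (∫ y, (dist y ω₁ + dist y ω₂) ^ 2 ∂μ))
    (x₁ x₂ : X) (ω₁ ω₂ : Ω)
    (hHfin : Integrable (fun y => (dist y ω₁ + dist y ω₂) ^ 2) μ)
    (hMfin : ∀ x ∈ ({x₁, x₂} : Set X), ∀ ω ∈ ({ω₁, ω₂} : Set Ω),
      Integrable (fun y => dist y ω ^ 2 * ρ x y) μ) :
    |(M x₁ ω₁ - M x₁ ω₂) - (M x₂ ω₁ - M x₂ ω₂)| ≤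
      C * dist ω₁ ω₂ * Hf ω₁ ω₂ * dist x₁ x₂ ^ β :=
  stmt_5_general μ β ρ L hLmeas C hC hHolder hL2int hL2 M hM Hf hHf x₁ x₂ ω₁ ω₂ hHfin hMfin
end

section
/- Let E be a real normed vector space, K ⊆ E a convex set, S ⊆ K a finite set, and ε, r > 0 with 2ε < r. Assume every point of K is within distance ε of some point of S. For x, y ∈ E define the graph distance d_G(x, y) as the infimum (in [0, ∞], with infimum of the empty set equal to ∞) over all finite sequences x = x₀, x₁, …, x_l = y with xᵢ ∈ S for 0 < i < l and ‖xᵢ₊₁ − xᵢ‖ ≤ r for all i, of the path length Σᵢ ‖xᵢ₊₁ − xᵢ‖. Then for all x, y ∈ K, d_G(x, y) ≤ (1 + 4ε/(r − 2ε)) ‖x − y‖. -/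
open scoped ENNReal

/-- The shortest-path graph distance through a set `S` with connectivity radius `r`:
the infimum (in `[0,∞]`, with `sInf ∅ = ∞`) over all finite sequences
`x = x₀, x₁, …, x_l = y` whose interior points lie in `S` and whose consecutive points are
at distance at most `r`, of the total path length `Σᵢ ‖xᵢ₊₁ − xᵢ‖`. -/
noncomputable def graphDist {E : Type*} [MetricSpace E] (S : Set E) (r : ℝ) (x y : E) :
    ℝ≥0∞ :=
  sInf { c : ℝ≥0∞ | ∃ (l : ℕ) (f : ℕ → E), f 0 = x ∧ f l = y ∧
    (∀ i, 0 < i → i < l → f i ∈ S) ∧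
    (∀ i < l, dist (f i) (f (i + 1)) ≤ r) ∧
    c = ∑ i ∈ Finset.range l, ENNReal.ofReal (dist (f i) (f (i + 1))) }

/-! The proof subdivides the segment `[x, y]` into `n ≈ ‖x - y‖ / (r - 2ε)` pieces of length at
most `r - 2ε` and moves every interior subdivision point to a sample point at distance `≤ ε`.
Consecutive points then stay within `r`, and the path is longer than `‖x - y‖` by at most
`2εn ≤ 4ε‖x - y‖ / (r - 2ε)`. Segments shorter than `r` are a single edge. -/

section MetricSpace

variable {E : Type*} [MetricSpace E] {S : Set E} {r ε δ : ℝ}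

theorem graphDist_le_of_path {x y : E} (l : ℕ) (f : ℕ → E) (h0 : f 0 = x) (hl : f l = y)
    (hS : ∀ i, 0 < i → i < l → f i ∈ S) (hr : ∀ i < l, dist (f i) (f (i + 1)) ≤ r) :
    graphDist S r x y ≤ ENNReal.ofReal (∑ i ∈ Finset.range l, dist (f i) (f (i + 1))) := by
  rw [ENNReal.ofReal_sum_of_nonneg fun _ _ => dist_nonneg]
  exact sInf_le ⟨l, f, h0, hl, hS, hr, rfl⟩

theorem graphDist_le_dist {x y : E} (h : dist x y ≤ r) :
    graphDist S r x y ≤ ENNReal.ofReal (dist x y) := by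
  simpa using graphDist_le_of_path (S := S) 1 (fun i => if i = 0 then x else y) rfl rfl
    (by omega) (by simpa using h)

theorem exists_approx_interior (hε : 0 ≤ ε) (g : ℕ → E) (n : ℕ)
    (hnear : ∀ i, 0 < i → i < n → ∃ s ∈ S, dist (g i) s ≤ ε) :
    ∃ p : ℕ → E, p 0 = g 0 ∧ p n = g n ∧ (∀ i, 0 < i → i < n → p i ∈ S) ∧
      ∀ i ≤ n, dist (g i) (p i) ≤ ε := by
  classical
  refine ⟨fun i => if h : 0 < i ∧ i < n then (hnear i h.1 h.2).choose else g i,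
    by simp, by simp, fun i hi hin => ?_, fun i _ => ?_⟩
  · simpa [hi, hin] using (hnear i hi hin).choose_spec.1
  · by_cases h : 0 < i ∧ i < n
    · simpa [h] using (hnear i h.1 h.2).choose_spec.2
    · simpa [h] using hε

theorem graphDist_le_of_chain (hε : 0 ≤ ε) (hδr : δ + 2 * ε ≤ r) (g : ℕ → E) (n : ℕ)
    (hg : ∀ i < n, dist (g i) (g (i + 1)) ≤ δ)
    (hnear : ∀ i, 0 < i → i < n → ∃ s ∈ S, dist (g i) s ≤ ε) :
    graphDist S r (g 0) (g n) ≤ ENNReal.ofReal (n * (δ + 2 * ε)) := by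
  obtain ⟨p, hp0, hpn, hpS, hgp⟩ := exists_approx_interior hε g n hnear
  have hedge : ∀ i < n, dist (p i) (p (i + 1)) ≤ δ + 2 * ε := fun i hi => by
    have := dist_triangle4 (p i) (g i) (g (i + 1)) (p (i + 1))
    linarith [dist_comm (g i) (p i), hgp i hi.le, hgp (i + 1) hi, hg i hi]
  refine (graphDist_le_of_path n p hp0 hpn hpS fun i hi => (hedge i hi).trans hδr).trans ?_
  refine ENNReal.ofReal_le_ofReal ?_
  simpa [mul_add] using Finset.sum_le_card_nsmul _ _ _ fun i hi => hedge i (Finset.mem_range.mp hi)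

end MetricSpace

theorem graphDist_le_of_convex {E : Type*} [NormedAddCommGroup E] [NormedSpace ℝ E]
    {K S : Set E} {ε r : ℝ} (hK : Convex ℝ K) (hdense : ∀ x ∈ K, ∃ s ∈ S, dist x s ≤ ε)
    (hε : 0 ≤ ε) {x y : E} (hx : x ∈ K) (hy : y ∈ K) {n : ℕ} (hn : n ≠ 0)
    (hstep : dist x y / n + 2 * ε ≤ r) :
    graphDist S r x y ≤ ENNReal.ofReal (n * (dist x y / n + 2 * ε)) := by
  have hn' : (n : ℝ) ≠ 0 := Nat.cast_ne_zero.mpr hn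
  let g : ℕ → E := fun i => AffineMap.lineMap x y ((i : ℝ) / n)
  have hg : ∀ i, dist (g i) (g (i + 1)) = dist x y / n := fun i => by
    rw [dist_lineMap_lineMap, Real.dist_eq, abs_sub_comm, Nat.cast_succ, add_div,
      add_sub_cancel_left, abs_of_nonneg (by positivity), one_div_mul_eq_div]
  have hgK : ∀ i ≤ n, g i ∈ K := fun i hi => hK.lineMap_mem hx hy
    ⟨by positivity, div_le_one_of_le₀ (Nat.cast_le.mpr hi) n.cast_nonneg⟩
  simpa [g, hn'] using graphDist_le_of_chain hε hstep g n (fun i _ => (hg i).le)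
    fun i _ hi => hdense _ (hgK i hi.le)

theorem exists_nat_div_le {D c : ℝ} (hc : 0 < c) (hcD : c < D) :
    ∃ n : ℕ, n ≠ 0 ∧ D / n ≤ c ∧ (n : ℝ) ≤ 2 * (D / c) := by
  have hDc : 1 < D / c := (one_lt_div hc).mpr hcD
  have hn : 0 < ⌈D / c⌉₊ := Nat.ceil_pos.mpr (by linarith)
  refine ⟨⌈D / c⌉₊, hn.ne', ?_, Nat.ceil_le_two_mul (by linarith)⟩
  rw [div_le_iff₀ (by exact_mod_cast hn), mul_comm, ← div_le_iff₀ hc]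
  exact Nat.le_ceil _

theorem stmt_9_general {E : Type*} [NormedAddCommGroup E] [NormedSpace ℝ E]
    (K : Set E) (hK : Convex ℝ K) (S : Set E)
    (ε r : ℝ) (hε : 0 < ε) (h2ε : 2 * ε < r)
    (hdense : ∀ x ∈ K, ∃ s ∈ S, dist x s ≤ ε) :
    ∀ x ∈ K, ∀ y ∈ K,
      graphDist S r x y ≤ ENNReal.ofReal ((1 + 4 * ε / (r - 2 * ε)) * ‖x - y‖) := by
  intro x hx y hy
  rw [← dist_eq_norm]
  have hc : 0 < r - 2 * ε := by linarith
  have hfac : 0 ≤ 4 * ε / (r - 2 * ε) := by positivity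
  rcases le_or_gt (dist x y) r with hD | hD
  · refine (graphDist_le_dist hD).trans (ENNReal.ofReal_le_ofReal ?_)
    nlinarith [dist_nonneg (x := x) (y := y)]
  · obtain ⟨n, hn, hstep, hn2⟩ := exists_nat_div_le hc (by linarith : r - 2 * ε < dist x y)
    refine (graphDist_le_of_convex hK hdense hε.le hx hy hn (by linarith)).trans
      (ENNReal.ofReal_le_ofReal ?_)
    have hn' : (n : ℝ) ≠ 0 := Nat.cast_ne_zero.mpr hn
    calc (n : ℝ) * (dist x y / n + 2 * ε) = dist x y + 2 * ε * n := by field_simp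
      _ ≤ dist x y + 2 * ε * (2 * (dist x y / (r - 2 * ε))) := by gcongr
      _ = (1 + 4 * ε / (r - 2 * ε)) * dist x y := by ring

/-- On a convex subset `K` of a normed space, if the finite set `S ⊆ K` is `ε`-dense in `K`
and `2ε < r`, then the shortest-path graph distance with radius `r` through `S` satisfies
`d_G(x, y) ≤ (1 + 4ε/(r − 2ε)) ‖x − y‖` for all `x, y ∈ K`. -/
theorem stmt_9 {E : Type*} [NormedAddCommGroup E] [NormedSpace ℝ E]
    (K : Set E) (hK : Convex ℝ K) (S : Set E) (hSK : S ⊆ K) (hS : S.Finite)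
    (ε r : ℝ) (hε : 0 < ε) (hr : 0 < r) (h2ε : 2 * ε < r)
    (hdense : ∀ x ∈ K, ∃ s ∈ S, dist x s ≤ ε) :
    ∀ x ∈ K, ∀ y ∈ K,
      graphDist S r x y ≤ ENNReal.ofReal ((1 + 4 * ε / (r - 2 * ε)) * ‖x - y‖) :=
  stmt_9_general K hK S ε r hε h2ε hdense
end
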